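/- Suppose there exists an optimal ride π' for a path scenario R with leftIdx(π') < rightIdx(π'). Then there exists an optimal ride π with leftIdx(π) < rightIdx(π) such that rm(π), the maximum node visited by π up to time leftIdx(π), belongs to V_C ∪ {s₀, t₀}. -/

import Mathlib

namespace RideSharing

/-- A ride in a graph with adjacency `adj`: a nonempty sequence of nodes where
consecutive nodes are adjacent. -/
def IsRide (adj : ℕ → ℕ → Prop) (π : List ℕ) : Prop :=
  π ≠ [] ∧ π.Chain' adj

/-- The cost of a ride: sum of the weights of traversed edges. -/
def cost (w : ℕ → ℕ → ℚ) : List ℕ → ℚ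
  | [] => 0
  | [_] => 0
  | a :: b :: rest => w a b + cost w (b :: rest)

/-- A ride satisfies a request `(s,t)` if `s` occurs at a time step weakly before
an occurrence of `t`. -/
def Satisfies (π : List ℕ) (s t : ℕ) : Prop :=
  ∃ i j : ℕ, i ≤ j ∧ π[i]? = some s ∧ π[j]? = some t

/-- `Pre π' π` : `π'` is obtained from `π` by (repeatedly) removing a contiguous
subsequence of nodes (the relation `π' ⪯ π` of the paper, stated with 0-based indices:
`π[1,i] , π[i',len]` becomes `π.take (i+1) ++ π.drop i'`). -/
inductive Pre : List ℕ → List ℕ → Prop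
  | refl (π : List ℕ) : Pre π π
  | step (π' π : List ℕ) (i i' : ℕ) :
      i < i' → i' < π.length →
      (π[i + 1]? = π[i']? ∨ π[i]? = π[i' - 1]?) →
      Pre π' (π.take (i + 1) ++ π.drop i') → Pre π' π

/-- A ride-sharing scenario. -/
structure Scenario where
  adj : ℕ → ℕ → Prop
  w : ℕ → ℕ → ℚ
  s0 : ℕ
  t0 : ℕ
  C : Finset (ℕ × ℕ)

def Feasible (R : Scenario) (π : List ℕ) : Prop :=
  IsRide R.adj π ∧ π.head? = some R.s0 ∧ π.getLast? = some R.t0 ∧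
    ∀ r ∈ R.C, Satisfies π r.1 r.2

def Optimal (R : Scenario) (π : List ℕ) : Prop :=
  Feasible R π ∧ ∀ π', Feasible R π' → cost R.w π ≤ cost R.w π'

/-- The set `V_C` of endpoints of requests. -/
def VC (C : Finset (ℕ × ℕ)) : Finset ℕ := C.image Prod.fst ∪ C.image Prod.snd

/-- The path graph on `{1,…,n}`. -/
def pathAdj (n : ℕ) (a b : ℕ) : Prop :=
  (b = a + 1 ∨ a = b + 1) ∧ 1 ≤ a ∧ a ≤ n ∧ 1 ≤ b ∧ b ≤ n

/-- The monotone segment of the path from `x` to `y`. -/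
def seg (x y : ℕ) : List ℕ :=
  if x ≤ y then (List.range (y - x + 1)).map (fun k => x + k)
  else (List.range (x - y + 1)).map (fun k => x - k)

/-- The ride through a list of waypoints, concatenating monotone segments. -/
def rideThrough : List ℕ → List ℕ
  | [] => []
  | [x] => [x]
  | x :: y :: rest => seg x y ++ (rideThrough (y :: rest)).tail

/-- Concatenation of rides (`π ↦ π'`), inserting the monotone connecting segment
if the endpoints differ. -/
def rconcat (a b : List ℕ) : List ℕ :=
  a ++ (seg (a.getLastD 0) (b.headD 0)).tail ++ b.tail

/-!
Let `S = V_C ∪ {s₀, t₀}` and suppose `m = rm(π) ∉ S`. Let `c` be the largest element of `S`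
below `m` (there is one, since `s₀ < m`). Up to time `leftIdx(π)` the ride climbs from `s₀ ≤ c`
to `m` and comes back down to `left(R) ≤ c` in steps of one, so it contains a loop `c ⋯ c`
whose interior lies in `(c, m]` and therefore avoids `S`. Erasing this loop leaves an optimal
ride that still reaches `left(R)` before `right(R)` and is strictly shorter; induction on the
length concludes.
-/

open List

section Satisfies

variable {s t : ℕ}

theorem Satisfies.mem {l : List ℕ} (h : Satisfies l s t) : s ∈ l ∧ t ∈ l :=
  let ⟨_, _, _, hi, hj⟩ := h
  ⟨mem_of_getElem? hi, mem_of_getElem? hj⟩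

theorem satisfies_cons_self {u : ℕ} {l : List ℕ} (ht : t ∈ u :: l) : Satisfies (u :: l) u t :=
  let ⟨j, hj⟩ := mem_iff_getElem?.1 ht
  ⟨0, j, j.zero_le, rfl, hj⟩

theorem Satisfies.sublist {l l' : List ℕ} (h : Satisfies l s t) (hl : l <+ l') :
    Satisfies l' s t := by
  obtain ⟨f, hf⟩ := sublist_iff_exists_orderEmbedding_getElem?_eq.1 hl
  obtain ⟨i, j, hij, hi, hj⟩ := h
  exact ⟨f i, f j, f.monotone hij, hf i ▸ hi, hf j ▸ hj⟩

theorem satisfies_append {A B : List ℕ} :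
    Satisfies (A ++ B) s t ↔ Satisfies A s t ∨ Satisfies B s t ∨ (s ∈ A ∧ t ∈ B) := by
  constructor
  · rintro ⟨i, j, hij, hi, hj⟩
    by_cases hjA : j < A.length
    · rw [getElem?_append_left hjA] at hj
      rw [getElem?_append_left (by omega)] at hi
      exact Or.inl ⟨i, j, hij, hi, hj⟩
    rw [getElem?_append_right (by omega)] at hj
    by_cases hiA : i < A.length
    · rw [getElem?_append_left hiA] at hi
      exact Or.inr (Or.inr ⟨mem_of_getElem? hi, mem_of_getElem? hj⟩)
    · rw [getElem?_append_right (by omega)] at hi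
      exact Or.inr (Or.inl ⟨i - A.length, j - A.length, by omega, hi, hj⟩)
  · rintro (⟨i, j, hij, hi, hj⟩ | ⟨i, j, hij, hi, hj⟩ | ⟨hs, ht⟩)
    · have hjA : j < A.length := (List.getElem?_eq_some_iff.1 hj).1
      exact ⟨i, j, hij, by rwa [getElem?_append_left (by omega)],
        by rwa [getElem?_append_left hjA]⟩
    · exact ⟨A.length + i, A.length + j, by omega,
        by rwa [getElem?_append_right (by omega), Nat.add_sub_cancel_left],
        by rwa [getElem?_append_right (by omega), Nat.add_sub_cancel_left]⟩
    · obtain ⟨i, hi⟩ := mem_iff_getElem?.1 hs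
      obtain ⟨j, hj⟩ := mem_iff_getElem?.1 ht
      have hiA : i < A.length := (List.getElem?_eq_some_iff.1 hi).1
      exact ⟨i, A.length + j, by omega, by rwa [getElem?_append_left hiA],
        by rwa [getElem?_append_right (by omega), Nat.add_sub_cancel_left]⟩

theorem Satisfies.eraseLoop {X Y Z : List ℕ} {u : ℕ} (h : Satisfies (X ++ u :: (Y ++ u :: Z)) s t)
    (hs : s ∉ Y) (ht : t ∉ Y) : Satisfies (X ++ u :: Z) s t := by
  have hcons : Satisfies (u :: (Y ++ u :: Z)) s t → Satisfies (u :: Z) s t := by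
    rw [← cons_append, satisfies_append]
    rintro (hY | hZ | ⟨hsY, htZ⟩)
    · obtain ⟨hsY, htY⟩ := hY.mem
      obtain rfl := (mem_cons.1 hsY).resolve_right hs
      obtain rfl := (mem_cons.1 htY).resolve_right ht
      exact satisfies_cons_self mem_cons_self
    · exact hZ
    · obtain rfl := (mem_cons.1 hsY).resolve_right hs
      exact satisfies_cons_self htZ
  rw [satisfies_append] at h ⊢
  rcases h with hX | hYZ | ⟨hsX, htYZ⟩
  · exact Or.inl hX
  · exact Or.inr (Or.inl (hcons hYZ))
  · refine Or.inr (Or.inr ⟨hsX, ?_⟩)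
    simp only [mem_cons, mem_append] at htYZ ⊢
    tauto

end Satisfies

section ListLoop

variable {α : Type*} {X Y Z : List α} {u : α}

theorem head?_loop : (X ++ u :: (Y ++ u :: Z)).head? = (X ++ u :: Z).head? := by
  cases X <;> simp

theorem getLast?_loop : (X ++ u :: (Y ++ u :: Z)).getLast? = (X ++ u :: Z).getLast? := by
  simp [getLast?_append, getLast?_cons]

theorem isChain_loop_iff {r : α → α → Prop} :
    (X ++ u :: (Y ++ u :: Z)).IsChain r ↔ (X ++ u :: Z).IsChain r ∧ (u :: Y ++ [u]).IsChain r := by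
  rw [isChain_split, show u :: (Y ++ u :: Z) = (u :: Y) ++ u :: Z from rfl,
    isChain_split (l₁ := u :: Y), isChain_split (l₁ := X) (l₂ := Z)]
  tauto

end ListLoop

theorem cost_append_cons (w : ℕ → ℕ → ℚ) (xs : List ℕ) (y : ℕ) (ys : List ℕ) :
    cost w (xs ++ y :: ys) = cost w (xs ++ [y]) + cost w (y :: ys) := by
  induction xs with
  | nil => simp [cost]
  | cons a xs ih =>
    cases xs with
    | nil => simp only [List.nil_append, List.cons_append, cost]; ring
    | cons c rest =>
      simp only [List.cons_append, cost] at *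
      rw [ih]; ring

theorem cost_loop (w : ℕ → ℕ → ℚ) (X Y Z : List ℕ) (u : ℕ) :
    cost w (X ++ u :: (Y ++ u :: Z)) = cost w (X ++ u :: Z) + cost w (u :: Y ++ [u]) := by
  have h₁ : cost w (X ++ u :: (Y ++ u :: Z)) = cost w (X ++ [u]) + cost w ((u :: Y) ++ u :: Z) :=
    cost_append_cons w X u (Y ++ u :: Z)
  have h₂ := cost_append_cons w (u :: Y) u Z
  have h₃ := cost_append_cons w X u Z
  linarith

theorem fst_mem_VC {C : Finset (ℕ × ℕ)} {r : ℕ × ℕ} (hr : r ∈ C) : r.1 ∈ VC C :=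
  Finset.mem_union_left _ (Finset.mem_image_of_mem _ hr)

theorem snd_mem_VC {C : Finset (ℕ × ℕ)} {r : ℕ × ℕ} (hr : r ∈ C) : r.2 ∈ VC C :=
  Finset.mem_union_right _ (Finset.mem_image_of_mem _ hr)

section Loop

variable {R : Scenario} {X Y Z : List ℕ} {u : ℕ}

theorem Feasible.insertLoop (h : Feasible R (X ++ u :: Z)) (hY : (u :: Y ++ [u]).IsChain R.adj) :
    Feasible R (X ++ u :: (Y ++ u :: Z)) := by
  obtain ⟨⟨-, hc⟩, hh, hl, hs⟩ := h
  exact ⟨⟨by simp, isChain_loop_iff.2 ⟨hc, hY⟩⟩, head?_loop.trans hh, getLast?_loop.trans hl,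
    fun r hr => (hs r hr).sublist (by simp)⟩

theorem Feasible.eraseLoop (h : Feasible R (X ++ u :: (Y ++ u :: Z)))
    (hY : ∀ y ∈ Y, y ∉ VC R.C) : Feasible R (X ++ u :: Z) := by
  obtain ⟨⟨-, hc⟩, hh, hl, hs⟩ := h
  exact ⟨⟨by simp, (isChain_loop_iff.1 hc).1⟩, head?_loop.symm.trans hh,
    getLast?_loop.symm.trans hl,
    fun r hr => (hs r hr).eraseLoop (fun h => hY _ h (fst_mem_VC hr))
      (fun h => hY _ h (snd_mem_VC hr))⟩

theorem Optimal.eraseLoop (h : Optimal R (X ++ u :: (Y ++ u :: Z)))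
    (hY : ∀ y ∈ Y, y ∉ VC R.C) : Optimal R (X ++ u :: Z) := by
  -- Going around the loop twice is feasible too, so optimality forces the loop to cost `≥ 0`.
  have hloop : (u :: Y ++ [u]).IsChain R.adj := (isChain_loop_iff.1 h.1.1.2).2
  have htwice := h.2 _ (h.1.insertLoop hloop)
  have e₁ := cost_loop R.w X Y Z u
  have e₂ := cost_loop R.w X Y (Y ++ u :: Z) u
  refine ⟨h.1.eraseLoop hY, fun π hπ => ?_⟩
  linarith [h.2 π hπ]

end Loop

section UnitSteps

theorem exists_eq_append_cons_of_lt_head {c a : ℕ} {l : List ℕ}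
    (hl : (a :: l).IsChain (fun x y => y ≤ x + 1 ∧ x ≤ y + 1)) (ha : c < a)
    (hmem : ∃ x ∈ l, x ≤ c) : ∃ Y Z, a :: l = Y ++ c :: Z ∧ ∀ y ∈ Y, c < y := by
  induction l generalizing a with
  | nil => simp at hmem
  | cons b l ih =>
    rw [isChain_cons_cons] at hl
    by_cases hb : b ≤ c
    · obtain rfl : b = c := by omega
      exact ⟨[a], l, rfl, by simpa using ha⟩
    · obtain ⟨x, hx, hxc⟩ := hmem
      obtain ⟨Y, Z, hYZ, hY⟩ := ih hl.2 (by omega)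
        ⟨x, (mem_cons.1 hx).resolve_left (by omega), hxc⟩
      exact ⟨a :: Y, Z, by rw [hYZ, cons_append], by simpa [ha] using hY⟩

theorem exists_eq_loop_of_lt {c : ℕ} {l : List ℕ}
    (hl : l.IsChain (fun x y => y ≤ x + 1 ∧ x ≤ y + 1)) (hhead : ∀ a ∈ l.head?, a ≤ c)
    (hlast : ∀ b ∈ l.getLast?, b ≤ c) (hmem : ∃ x ∈ l, c < x) :
    ∃ X Y Z, l = X ++ c :: (Y ++ c :: Z) ∧ ∀ y ∈ Y, c < y := by
  induction l with
  | nil => simp at hmem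
  | cons a l ih =>
    have ha : a ≤ c := hhead a rfl
    cases l with
    | nil => simp only [mem_cons, not_mem_nil, or_false, exists_eq_left] at hmem; omega
    | cons b l =>
      rw [isChain_cons_cons] at hl
      by_cases hb : b ≤ c
      · obtain ⟨x, hx, hxc⟩ := hmem
        obtain ⟨X, Y, Z, hXYZ, hY⟩ := ih hl.2 (by simpa using hb)
          (by simpa [getLast?_cons_cons] using hlast)
          ⟨x, (mem_cons.1 hx).resolve_left (by omega), hxc⟩
        exact ⟨a :: X, Y, Z, by rw [hXYZ, cons_append], hY⟩
      · have hac : a = c := by omega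
        have hz := getLast?_eq_some_getLast (cons_ne_nil b l)
        have hzc : (b :: l).getLast _ ≤ c := hlast _ (by rw [getLast?_cons_cons]; exact hz)
        obtain ⟨Y, Z, hYZ, hY⟩ := exists_eq_append_cons_of_lt_head hl.2 (by omega)
          ⟨_, (mem_cons.1 (mem_of_getLast? hz)).resolve_left (by omega), hzc⟩
        exact ⟨[], Y, Z, by rw [hac, hYZ]; rfl, hY⟩

end UnitSteps

theorem idxOf_lt_idxOf_append_iff {l₁ l₂ : List ℕ} {a b : ℕ} (ha : a ∉ l₁) (hb : b ∉ l₁) :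
    (l₁ ++ l₂).idxOf a < (l₁ ++ l₂).idxOf b ↔ l₂.idxOf a < l₂.idxOf b := by
  rw [idxOf_append_of_notMem ha, idxOf_append_of_notMem hb]
  omega

/-- `rm(π)` of the paper, for `v = left(R)`. -/
def maxUntil (π : List ℕ) (v : ℕ) : ℕ := (π.take (π.idxOf v + 1)).foldr max 0

section Step

variable {R : Scenario} {S : Finset ℕ} {L : ℕ} {π : List ℕ}

theorem Feasible.exists_loop_of_maxUntil_notMem (hadj : ∀ a b, R.adj a b → b ≤ a + 1 ∧ a ≤ b + 1)
    (hS : VC R.C ⊆ S) (hs0 : R.s0 ∈ S) (hL : L ∈ S) (hπ : Feasible R π) (hLπ : L ∈ π)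
    (hm : maxUntil π L ∉ S) :
    ∃ X Y W u, π = X ++ u :: (Y ++ u :: W) ∧ X.length + Y.length < π.idxOf L ∧
      ∀ y ∈ Y, y ∉ VC R.C := by
  set P := π.take (π.idxOf L + 1) with hP
  have hPhead : P.head? = some R.s0 := by simp [hP, head?_take, hπ.2.1]
  have hPlast : P.getLast? = some L := by simp [hP, getLast?_take, getElem?_idxOf hLπ]
  set m := maxUntil π L
  have hlt : ∀ v ∈ P, v ∈ S → v < m := fun v hv hvS =>
    (le_max_of_le' 0 hv le_rfl).lt_of_ne (ne_of_mem_of_not_mem hvS hm)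
  obtain ⟨c, hc, hcmax⟩ := (S.filter (· < m)).exists_max_image id
    ⟨R.s0, Finset.mem_filter.2 ⟨hs0, hlt _ (mem_of_mem_head? hPhead) hs0⟩⟩
  rw [Finset.mem_filter] at hc
  have hle : ∀ v ∈ P, v ∈ S → v ≤ c := fun v hv hvS =>
    hcmax v (Finset.mem_filter.2 ⟨hvS, hlt v hv hvS⟩)
  have hexc : ∃ x ∈ P, c < x := by
    by_contra! h
    exact absurd (max_le_of_forall_le P c h) (not_le.2 hc.2)
  obtain ⟨X, Y, Z, hXYZ, hY⟩ := exists_eq_loop_of_lt (l := P) ((hπ.1.2.take _).imp hadj)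
    (by simpa [hPhead] using hle _ (mem_of_mem_head? hPhead) hs0)
    (by simpa [hPlast] using hle _ (mem_of_getLast? hPlast) hL) hexc
  have hPlen : P.length = π.idxOf L + 1 := by
    simp [hP, Nat.succ_le_of_lt (idxOf_lt_length_of_mem hLπ)]
  refine ⟨X, Y, Z ++ π.drop (π.idxOf L + 1), c, ?_, ?_, fun y hy hyC => ?_⟩
  · conv_lhs => rw [← take_append_drop (π.idxOf L + 1) π, ← hP, hXYZ]
    simp
  · rw [hXYZ] at hPlen
    simp only [length_append, length_cons] at hPlen
    omega
  · exact (hY y hy).not_ge (hle y (by rw [hXYZ]; simp [hy]) (hS hyC))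

theorem Optimal.exists_shorter_of_maxUntil_notMem
    (hadj : ∀ a b, R.adj a b → b ≤ a + 1 ∧ a ≤ b + 1) (hS : VC R.C ⊆ S) (hs0 : R.s0 ∈ S)
    (hL : L ∈ S) {Rt : ℕ} (hπ : Optimal R π) (hlr : π.idxOf L < π.idxOf Rt)
    (hm : maxUntil π L ∉ S) :
    ∃ π₂, Optimal R π₂ ∧ π₂.length < π.length ∧ π₂.idxOf L < π₂.idxOf Rt := by
  have hLπ : L ∈ π := idxOf_lt_length_iff.1 (hlr.trans_le idxOf_le_length)
  obtain ⟨X, Y, W, u, rfl, hlen, hY⟩ :=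
    hπ.1.exists_loop_of_maxUntil_notMem hadj hS hs0 hL hLπ hm
  refine ⟨X ++ u :: W, hπ.eraseLoop hY, by simp, ?_⟩
  rw [show X ++ u :: (Y ++ u :: W) = (X ++ u :: Y) ++ u :: W by simp] at hlr hlen
  -- `L` and `Rt` first occur after the loop, so erasing it shifts both indices equally
  have hnot : ∀ v, ((X ++ u :: Y) ++ u :: W).idxOf L ≤ ((X ++ u :: Y) ++ u :: W).idxOf v →
      v ∉ X ++ u :: Y := fun v hv hmem => by
    have := ((prefix_append _ (u :: W)).mem_iff_idxOf_lt_length v).1 hmem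
    simp only [length_append, length_cons] at this
    omega
  have hL' := hnot L le_rfl
  have hR' := hnot Rt hlr.le
  rw [idxOf_lt_idxOf_append_iff hL' hR'] at hlr
  exact (idxOf_lt_idxOf_append_iff (fun h => hL' (by simp [h])) (fun h => hR' (by simp [h]))).2 hlr

theorem Optimal.exists_maxUntil_mem (hadj : ∀ a b, R.adj a b → b ≤ a + 1 ∧ a ≤ b + 1)
    (hS : VC R.C ⊆ S) (hs0 : R.s0 ∈ S) (hL : L ∈ S) {Rt : ℕ} (hπ : Optimal R π)
    (hlr : π.idxOf L < π.idxOf Rt) :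
    ∃ π, Optimal R π ∧ π.idxOf L < π.idxOf Rt ∧ maxUntil π L ∈ S := by
  induction hn : π.length using Nat.strong_induction_on generalizing π with
  | _ n ih =>
    by_cases hm : maxUntil π L ∈ S
    · exact ⟨π, hπ, hlr, hm⟩
    obtain ⟨π₂, hπ₂, hlen, hlr₂⟩ := hπ.exists_shorter_of_maxUntil_notMem hadj hS hs0 hL hlr hm
    exact ih _ (hn ▸ hlen) hπ₂ hlr₂ rfl

end Step

theorem exists_optimal_rm_in_VC_general (n : ℕ) (w : ℕ → ℕ → ℚ) (s0 t0 : ℕ)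
    (C : Finset (ℕ × ℕ)) (L Rt : ℕ)
    (hL : IsLeast {v | v ∈ VC C} L)
    (π' : List ℕ) (hopt : Optimal ⟨pathAdj n, w, s0, t0, C⟩ π')
    (hlr : π'.idxOf L < π'.idxOf Rt) :
    ∃ π, Optimal ⟨pathAdj n, w, s0, t0, C⟩ π ∧
      π.idxOf L < π.idxOf Rt ∧
      (π.take (π.idxOf L + 1)).foldr max 0 ∈ VC C ∪ {s0, t0} := by
  have hadj : ∀ a b, pathAdj n a b → b ≤ a + 1 ∧ a ≤ b + 1 := fun a b h => by
    rcases h.1 with rfl | rfl <;> omega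
  exact hopt.exists_maxUntil_mem hadj Finset.subset_union_left (by simp)
    (Finset.mem_union_left _ hL.1) hlr

/-- in the inner case, if some optimal ride reaches `left(R)` before
`right(R)`, then there is such an optimal ride `π` whose value
`rm(π) = max_{i ≤ leftIdx(π)} π_i` belongs to `V_C ∪ {s₀,t₀}`. -/
theorem exists_optimal_rm_in_VC (n : ℕ) (w : ℕ → ℕ → ℚ) (s0 t0 : ℕ)
    (C : Finset (ℕ × ℕ)) (L Rt : ℕ)
    (hL : IsLeast {v | v ∈ VC C} L) (hR : IsGreatest {v | v ∈ VC C} Rt)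
    (hinner : (L < s0 ∧ s0 < Rt) ∨ (L < t0 ∧ t0 < Rt))
    (π' : List ℕ) (hopt : Optimal ⟨pathAdj n, w, s0, t0, C⟩ π')
    (hlr : π'.idxOf L < π'.idxOf Rt) :
    ∃ π, Optimal ⟨pathAdj n, w, s0, t0, C⟩ π ∧
      π.idxOf L < π.idxOf Rt ∧
      (π.take (π.idxOf L + 1)).foldr max 0 ∈ VC C ∪ {s0, t0} :=
  exists_optimal_rm_in_VC_general n w s0 t0 C L Rt hL π' hopt hlr

end RideSharing
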